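/- Fix a moment–quantile uncertainty set 𝓕 on a finite value set G (nonempty) with OPT(F) > 0 for all F ∈ 𝓕, and reals θ_Revenue, θ_Regret, θ_Ratio with θ_Ratio ≥ 0. There exists a mechanism Φ achieving the triple — i.e., min_{F∈𝓕} Revenue(Φ,F) ≥ θ_Revenue, max_{F∈𝓕} Regret(Φ,F) ≤ θ_Regret, and min_{F∈𝓕} Ratio(Φ,F) ≥ θ_Ratio — if and only if there exist φ : G → ℝ with φ(s) ≥ 0, Σ_{s∈G} φ(s) = 1, and α_Revenue, α_Regret, α_Ratio : I × G → ℝ, β_Revenue, β_Regret, β_Ratio : J × G → ℝ satisfying, for all p ∈ G: Σ_i α_{Revenue,i}(p)·m_i + Σ_j β_{Revenue,j}(p)·q_j ≤ −θ_Revenue; Σ_i α_{Regret,i}(p)·m_i + Σ_j β_{Regret,j}(p)·q_j ≤ θ_Regret; Σ_i α_{Ratio,i}(p)·m_i + Σ_j β_{Ratio,j}(p)·q_j ≤ 0; and, for all v, p ∈ G: − Σ_{s≤v} s·φ(s) − Σ_i α_{Revenue,i}(p)·v^i − Σ_j β_{Revenue,j}(p)·1{v ≥ r_j} ≤ 0;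 p·1{v ≥ p} − Σ_{s≤v} s·φ(s) − Σ_i α_{Regret,i}(p)·v^i − Σ_j β_{Regret,j}(p)·1{v ≥ r_j} ≤ 0; θ_Ratio·p·1{v ≥ p} − Σ_{s≤v} s·φ(s) − Σ_i α_{Ratio,i}(p)·v^i − Σ_j β_{Ratio,j}(p)·1{v ≥ r_j} ≤ 0. Moreover, any φ from a feasible solution gives a mechanism achieving the triple. -/

import Mathlib

noncomputable section

namespace RobustPricing

/-- A probability weight vector on the grid `{v 0, …, v K}`. -/
def IsDist {K : ℕ} (f : Fin (K + 1) → ℝ) : Prop :=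
  (∀ i, 0 ≤ f i) ∧ ∑ i, f i = 1

/-- Tail probability `F̄(p) = ∑_{v ∈ G, v ≥ p} f(v)`. -/
def tail {K : ℕ} (v f : Fin (K + 1) → ℝ) (p : ℝ) : ℝ :=
  ∑ i, if p ≤ v i then f i else 0

/-- Expected revenue of the price distribution `φ` against the value distribution `f`. -/
def revenue {K : ℕ} (v φ f : Fin (K + 1) → ℝ) : ℝ :=
  ∑ i, φ i * v i * tail v f (v i)

/-- `OPT(F) = max_{p ∈ G} p · F̄(p)`. -/
def opt {K : ℕ} (v f : Fin (K + 1) → ℝ) : ℝ :=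
  ⨆ i, v i * tail v f (v i)

/-- `Regret(Φ, F) = OPT(F) − Revenue(Φ, F)`. -/
def regret {K : ℕ} (v φ f : Fin (K + 1) → ℝ) : ℝ :=
  opt v f - revenue v φ f

/-- `Ratio(Φ, F) = Revenue(Φ, F) / OPT(F)`. -/
def ratio {K : ℕ} (v φ f : Fin (K + 1) → ℝ) : ℝ :=
  revenue v φ f / opt v f

/-- The set of mechanisms (price distributions on the grid). -/
def Mech (K : ℕ) : Set (Fin (K + 1) → ℝ) := {φ | IsDist φ}

/-- Worst-case `λ`-regret `R_λ^Φ(𝓕)` of mechanism `φ` over the uncertainty set `F`. -/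
def wcReg {K : ℕ} (v : Fin (K + 1) → ℝ) (F : Set (Fin (K + 1) → ℝ))
    (φ : Fin (K + 1) → ℝ) (l : ℝ) : ℝ :=
  sSup ((fun f => l * opt v f - revenue v φ f) '' F)

/-- Minimax `λ`-regret `R_λ*(𝓕)`. -/
def minimaxReg {K : ℕ} (v : Fin (K + 1) → ℝ) (F : Set (Fin (K + 1) → ℝ)) (l : ℝ) : ℝ :=
  sInf ((fun φ => wcReg v F φ l) '' Mech K)

/-- Worst-case revenue `min_{F ∈ 𝓕} Revenue(Φ, F)`. -/
def worstRevenue {K : ℕ} (v : Fin (K + 1) → ℝ) (F : Set (Fin (K + 1) → ℝ))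
    (φ : Fin (K + 1) → ℝ) : ℝ :=
  sInf ((fun f => revenue v φ f) '' F)

/-- Worst-case regret `max_{F ∈ 𝓕} Regret(Φ, F)`. -/
def worstRegret {K : ℕ} (v : Fin (K + 1) → ℝ) (F : Set (Fin (K + 1) → ℝ))
    (φ : Fin (K + 1) → ℝ) : ℝ :=
  sSup ((fun f => regret v φ f) '' F)

/-- Worst-case ratio `min_{F ∈ 𝓕} Ratio(Φ, F)`. -/
def worstRatio {K : ℕ} (v : Fin (K + 1) → ℝ) (F : Set (Fin (K + 1) → ℝ))
    (φ : Fin (K + 1) → ℝ) : ℝ :=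
  sInf ((fun f => ratio v φ f) '' F)

/-- Maximin revenue `θ*_Revenue(𝓕) = max_Φ min_{F ∈ 𝓕} Revenue(Φ, F)`. -/
def thetaRevStar {K : ℕ} (v : Fin (K + 1) → ℝ) (F : Set (Fin (K + 1) → ℝ)) : ℝ :=
  sSup ((fun φ => worstRevenue v F φ) '' Mech K)

/-- Minimax regret `θ*_Regret(𝓕) = min_Φ max_{F ∈ 𝓕} Regret(Φ, F)`. -/
def thetaRegStar {K : ℕ} (v : Fin (K + 1) → ℝ) (F : Set (Fin (K + 1) → ℝ)) : ℝ :=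
  sInf ((fun φ => worstRegret v F φ) '' Mech K)

/-- Maximin ratio `θ*_Ratio(𝓕) = max_Φ min_{F ∈ 𝓕} Ratio(Φ, F)`. -/
def thetaRatStar {K : ℕ} (v : Fin (K + 1) → ℝ) (F : Set (Fin (K + 1) → ℝ)) : ℝ :=
  sSup ((fun φ => worstRatio v F φ) '' Mech K)

/-- Relative performance of `Φ` over all three criteria:
`RelPerf(Φ, All, 𝓕) = min_{F ∈ 𝓕} min{Rev/θ*_Rev, θ*_Reg/Reg, Ratio/θ*_Ratio}`. -/
def relPerfAll {K : ℕ} (v : Fin (K + 1) → ℝ) (F : Set (Fin (K + 1) → ℝ))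
    (φ : Fin (K + 1) → ℝ) : ℝ :=
  sInf ((fun f => min (revenue v φ f / thetaRevStar v F)
    (min (thetaRegStar v F / regret v φ f) (ratio v φ f / thetaRatStar v F))) '' F)

/-- Multi-criterion robust approximation factor `c*(𝓕) = max_Φ RelPerf(Φ, All, 𝓕)`. -/
def cstar {K : ℕ} (v : Fin (K + 1) → ℝ) (F : Set (Fin (K + 1) → ℝ)) : ℝ :=
  sSup ((fun φ => relPerfAll v F φ) '' Mech K)

/-- The moment–quantile uncertainty set: distributions on the grid whose `i`-th moments
are `m i` for `i ∈ I` and whose tail probability at `r j` is `q j` for `j ∈ J`. -/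
def MQSet {K : ℕ} (v : Fin (K + 1) → ℝ) (I : Finset ℕ) (m : ℕ → ℝ)
    (J : Finset ℕ) (r q : ℕ → ℝ) : Set (Fin (K + 1) → ℝ) :=
  {f | IsDist f ∧ (∀ i ∈ I, ∑ k, f k * v k ^ i = m i) ∧ (∀ j ∈ J, tail v f (r j) = q j)}

/-- Cumulative term `∑_{s ∈ G, s ≤ v_w} s · φ(s)`. -/
def cum {K : ℕ} (v φ : Fin (K + 1) → ℝ) (w : Fin (K + 1)) : ℝ :=
  ∑ s, if v s ≤ v w then v s * φ s else 0

section LPDuality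

open Finset

variable {ι : Type*} [Fintype ι] [DecidableEq ι]

section Cara
variable {E : Type*} [AddCommGroup E] [Module ℝ E]

open Classical in
/-- Carathéodory for cones: any nonneg combination can be rewritten with linearly
independent support. -/
lemma cara_aux (x : ι → E) (n : ℕ) :
    ∀ t : ι → ℝ, (univ.filter (fun i => t i ≠ 0)).card ≤ n → (∀ i, 0 ≤ t i) →
      ∃ t' : ι → ℝ, (∀ i, 0 ≤ t' i) ∧ (∑ i, t' i • x i = ∑ i, t i • x i) ∧
        LinearIndependent ℝ (fun i : {i // t' i ≠ 0} => x i) := by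
  induction n with
  | zero =>
    intro t hcard _
    refine ⟨t, ‹_›, rfl, ?_⟩
    have h0 : ∀ i, t i = 0 := by
      intro i
      by_contra h
      have : i ∈ univ.filter (fun i => t i ≠ 0) := by simp [h]
      have := card_pos.mpr ⟨i, this⟩
      omega
    haveI : IsEmpty {i // t i ≠ 0} := ⟨fun ⟨i, hi⟩ => hi (h0 i)⟩
    exact linearIndependent_empty_type
  | succ n IH =>
    intro t hcard ht
    by_cases hli : LinearIndependent ℝ (fun i : {i // t i ≠ 0} => x i)
    · exact ⟨t, ht, rfl, hli⟩
    · obtain ⟨g, hg0, jg, hjg⟩ := Fintype.not_linearIndependent_iff.mp hli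
      -- extend g to ι, WLOG has a positive entry
      have hmain : ∀ g : {i // t i ≠ 0} → ℝ, (∑ i, g i • x (i : ι) = 0) →
          (∃ j, 0 < g j) →
          ∃ t' : ι → ℝ, (∀ i, 0 ≤ t' i) ∧ (∑ i, t' i • x i = ∑ i, t i • x i) ∧
            LinearIndependent ℝ (fun i : {i // t' i ≠ 0} => x i) := by
        intro g hg hjex
        obtain ⟨j, hj⟩ := hjex
        set gg : ι → ℝ := fun i => if h : t i ≠ 0 then g ⟨i, h⟩ else 0 with hgg
        have e1 : ∑ i ∈ univ.filter (fun i => t i ≠ 0), gg i • x i = ∑ i, gg i • x i :=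
          Finset.sum_filter_of_ne (by
            intro i _ h; by_contra hti
            simp [hgg, hti] at h)
        have e2 : ∑ i ∈ univ.filter (fun i => t i ≠ 0), gg i • x i
            = ∑ i : {i // t i ≠ 0}, gg (i : ι) • x (i : ι) :=
          Finset.sum_subtype _ (by simp) _
        have hsum : ∑ i, gg i • x i = 0 := by
          rw [← e1, e2, ← hg]
          exact Finset.sum_congr rfl (fun i _ => by simp [hgg, i.2])
        set s : Finset ι := univ.filter (fun i => 0 < gg i) with hs
        have hjs : (j : ι) ∈ s := by simp [hs, hgg, j.2, hj]
        have hsne : s.Nonempty := ⟨j, hjs⟩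
        obtain ⟨i₀, hi₀s, hi₀min⟩ := s.exists_min_image (fun i => t i / gg i) hsne
        set ρ : ℝ := t i₀ / gg i₀ with hρ
        have hggi₀ : 0 < gg i₀ := by simpa [hs] using hi₀s
        have hρ0 : 0 ≤ ρ := div_nonneg (ht i₀) hggi₀.le
        set t' : ι → ℝ := fun i => t i - ρ * gg i with ht'
        have ht'0 : ∀ i, 0 ≤ t' i := by
          intro i
          by_cases hpos : 0 < gg i
          · have := hi₀min i (by simp [hs, hpos])
            have : ρ * gg i ≤ t i := by
              rw [div_le_div_iff₀ hggi₀ hpos] at this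
              calc ρ * gg i = t i₀ / gg i₀ * gg i := rfl
                _ ≤ t i := by
                  rw [div_mul_eq_mul_div, div_le_iff₀ hggi₀]
                  linarith [this]
            simp [ht']; linarith
          · push_neg at hpos
            have : ρ * gg i ≤ 0 := mul_nonpos_of_nonneg_of_nonpos hρ0 hpos
            simp only [ht']
            linarith [ht i]
        have hsub : ∀ i, t i = 0 → t' i = 0 := by
          intro i hi
          simp [ht', hgg, hi]
        have ht'i₀ : t' i₀ = 0 := by
          simp only [ht', hρ]
          field_simp
          ring
        have hti₀ : t i₀ ≠ 0 := by
          by_contra h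
          simp [hgg, h] at hggi₀
        have hcard' : (univ.filter (fun i => t' i ≠ 0)).card ≤ n := by
          have hss : univ.filter (fun i => t' i ≠ 0) ⊆
              (univ.filter (fun i => t i ≠ 0)).erase i₀ := by
            intro i hi
            simp only [mem_filter, mem_univ, true_and] at hi
            refine Finset.mem_erase.mpr ⟨?_, ?_⟩
            · rintro rfl; exact hi ht'i₀
            · simp only [mem_filter, mem_univ, true_and]
              intro h; exact hi (hsub i h)
          have := Finset.card_le_card hss
          have hc := Finset.card_erase_of_mem (by simp [hti₀] :
            i₀ ∈ univ.filter (fun i => t i ≠ 0))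
          omega
        obtain ⟨t'', h1, h2, h3⟩ := IH t' hcard' ht'0
        refine ⟨t'', h1, ?_, h3⟩
        rw [h2]
        have : ∑ i, t' i • x i = ∑ i, t i • x i - ρ • ∑ i, gg i • x i := by
          rw [Finset.smul_sum, ← Finset.sum_sub_distrib]
          congr 1; ext i
          simp [ht', sub_smul, mul_smul]
        rw [this, hsum, smul_zero, sub_zero]
      rcases lt_or_ge 0 (g jg) with h | h
      · exact hmain g hg0 ⟨jg, h⟩
      · refine hmain (-g) (by simpa using hg0) ⟨jg, ?_⟩
        simp only [Pi.neg_apply]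
        cases' lt_or_eq_of_le h with h' h'
        · linarith
        · exact absurd h' hjg

end Cara

section Closed

open Classical in
lemma isClosed_coneSet {E : Type*} [NormedAddCommGroup E] [NormedSpace ℝ E]
    [FiniteDimensional ℝ E] (x : ι → E) :
    IsClosed {b : E | ∃ t : ι → ℝ, (∀ i, 0 ≤ t i) ∧ ∑ i, t i • x i = b} := by
  classical
  -- closedness for independent subfamilies
  have key : ∀ S : Finset ι, LinearIndependent ℝ (fun i : S => x i) →
      IsClosed {b : E | ∃ t : S → ℝ, (∀ i, 0 ≤ t i) ∧ ∑ i : S, t i • x (i : ι) = b} := by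
    intro S hS
    set φ : (S → ℝ) →ₗ[ℝ] E := (Fintype.linearCombination ℝ) (fun i : S => x i) with hφ
    have hφapp : ∀ t : S → ℝ, φ t = ∑ i : S, t i • x (i : ι) := by
      intro t; simp [hφ, Fintype.linearCombination_apply]
    have hker : LinearMap.ker φ = ⊥ := by
      rw [LinearMap.ker_eq_bot']
      intro t h
      funext i
      exact Fintype.linearIndependent_iff.mp hS t (by rw [← hφapp]; exact h) i
    have hce := LinearMap.isClosedEmbedding_of_injective hker
    have hclosed : IsClosed {t : S → ℝ | ∀ i, 0 ≤ t i} := by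
      have : {t : S → ℝ | ∀ i, 0 ≤ t i} = ⋂ i, (fun t : S → ℝ => t i) ⁻¹' Set.Ici 0 := by
        ext t; simp [Set.mem_iInter]
      rw [this]
      exact isClosed_iInter (fun i => IsClosed.preimage (continuous_apply i) isClosed_Ici)
    have himg : {b : E | ∃ t : S → ℝ, (∀ i, 0 ≤ t i) ∧ ∑ i : S, t i • x (i : ι) = b}
        = φ '' {t : S → ℝ | ∀ i, 0 ≤ t i} := by
      ext b
      constructor
      · rintro ⟨t, ht, rfl⟩; exact ⟨t, ht, (hφapp t)⟩
      · rintro ⟨t, ht, rfl⟩; exact ⟨t, ht, (hφapp t).symm⟩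
    rw [himg]
    exact hce.isClosedMap _ hclosed
  have main : {b : E | ∃ t : ι → ℝ, (∀ i, 0 ≤ t i) ∧ ∑ i, t i • x i = b}
      = ⋃ S ∈ {S : Finset ι | LinearIndependent ℝ (fun i : S => x i)},
          {b : E | ∃ t : S → ℝ, (∀ i, 0 ≤ t i) ∧ ∑ i : S, t i • x (i : ι) = b} := by
    ext b
    simp only [Set.mem_iUnion, Set.mem_setOf_eq]
    constructor
    · rintro ⟨t, ht, rfl⟩
      obtain ⟨t', ht'0, ht'sum, ht'li⟩ :=
        cara_aux x (univ.filter (fun i => t i ≠ 0)).card t le_rfl ht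
      refine ⟨univ.filter (fun i => t' i ≠ 0), ?_, fun i => t' i, fun i => ht'0 i, ?_⟩
      · exact (linearIndependent_equiv (Equiv.subtypeEquivRight
          (fun i => by simp))).mpr ht'li
      · rw [Finset.sum_coe_sort _ (fun i => t' i • x i),
          Finset.sum_filter_of_ne (fun i _ h => by
            intro h0; simp [h0] at h), ht'sum]
    · rintro ⟨S, hS, t, ht, rfl⟩
      refine ⟨fun i => if h : i ∈ S then t ⟨i, h⟩ else 0, fun i => ?_, ?_⟩
      · by_cases h : i ∈ S <;> simp [h, ht]
      · symm
        calc ∑ i : {x // x ∈ S}, t i • x (i : ι)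
            = ∑ i : {x // x ∈ S},
                (fun i => if h : i ∈ S then t ⟨i, h⟩ else 0) (i : ι) • x (i : ι) :=
              Finset.sum_congr rfl (fun i _ => by simp [i.2])
          _ = ∑ i ∈ S, (fun i => if h : i ∈ S then t ⟨i, h⟩ else 0) i • x i :=
              Finset.sum_coe_sort S (fun i => (fun i => if h : i ∈ S then t ⟨i, h⟩ else 0) i • x i)
          _ = ∑ i : ι, (fun i => if h : i ∈ S then t ⟨i, h⟩ else 0) i • x i :=
              Finset.sum_subset (Finset.subset_univ S) (by intro i _ h; simp [h])
  rw [main]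
  exact Set.Finite.isClosed_biUnion (Set.toFinite _) (fun S hS => key S hS)

end Closed

section Farkas

open RealInnerProductSpace

lemma farkas_sep {E : Type*} [NormedAddCommGroup E] [InnerProductSpace ℝ E]
    [FiniteDimensional ℝ E] (x : ι → E) (b : E)
    (h : ¬ ∃ t : ι → ℝ, (∀ i, 0 ≤ t i) ∧ ∑ i, t i • x i = b) :
    ∃ y : E, (∀ i, 0 ≤ ⟪x i, y⟫) ∧ ⟪b, y⟫ < 0 := by
  classical
  set K : ConvexCone ℝ E :=
    { carrier := {c : E | ∃ t : ι → ℝ, (∀ i, 0 ≤ t i) ∧ ∑ i, t i • x i = c}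
      smul_mem' := by
        rintro c hc z ⟨t, ht, rfl⟩
        refine ⟨fun i => c * t i, fun i => mul_nonneg hc.le (ht i), ?_⟩
        rw [Finset.smul_sum]
        exact Finset.sum_congr rfl (fun i _ => by rw [smul_smul])
      add_mem' := by
        rintro z ⟨t, ht, rfl⟩ z' ⟨t', ht', rfl⟩
        refine ⟨fun i => t i + t' i, fun i => add_nonneg (ht i) (ht' i), ?_⟩
        rw [← Finset.sum_add_distrib]
        exact Finset.sum_congr rfl (fun i _ => by rw [add_smul]) } with hK
  have hne : (K : Set E).Nonempty := ⟨0, ⟨0, fun i => le_rfl, by simp⟩⟩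
  have hcl : IsClosed (K : Set E) := isClosed_coneSet x
  have hbK : b ∉ K := h
  obtain ⟨y, hy1, hy2⟩ :=
    ProperCone.hyperplane_separation'
      (⟨K.toPointedCone ⟨0, fun i => le_rfl, by simp⟩, hcl⟩ : ProperCone ℝ E) hbK
  refine ⟨y, fun i => ?_, hy2⟩
  apply hy1
  exact ⟨fun i' => if i' = i then 1 else 0, fun i' => by positivity, by simp⟩

/-- LP duality, in the form we need. -/
lemma lp_dual {n d : Type*} [Fintype n] [Fintype d] [DecidableEq n] [DecidableEq d]
    (A : d → n → ℝ) (b : d → ℝ) (c : n → ℝ) (θ : ℝ)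
    (hfeas : ∃ f : n → ℝ, (∀ w, 0 ≤ f w) ∧ ∀ k, ∑ w, A k w * f w = b k)
    (hbound : ∀ f : n → ℝ, (∀ w, 0 ≤ f w) → (∀ k, ∑ w, A k w * f w = b k) →
      ∑ w, c w * f w ≤ θ) :
    ∃ y : d → ℝ, (∀ w, c w ≤ ∑ k, y k * A k w) ∧ ∑ k, y k * b k ≤ θ := by
  classical
  set L : ((n ⊕ Unit) → ℝ) ≃ₗ[ℝ] EuclideanSpace ℝ (n ⊕ Unit) :=
    (WithLp.linearEquiv 2 ℝ ((n ⊕ Unit) → ℝ)).symm with hL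
  -- columns of Farkas system, indexed by d ⊕ d ⊕ n ⊕ Unit
  set col : (d ⊕ d ⊕ n ⊕ Unit) → ((n ⊕ Unit) → ℝ) := fun idx =>
    Sum.elim (fun k => Sum.elim (fun w => A k w) (fun _ => b k))
      (Sum.elim (fun k => Sum.elim (fun w => -(A k w)) (fun _ => -(b k)))
        (Sum.elim (fun w₀ => Sum.elim (fun w => if w = w₀ then (-1 : ℝ) else 0) (fun _ => 0))
          (fun _ => Sum.elim (fun _ => 0) (fun _ => 1)))) idx with hcol
  set tgt : (n ⊕ Unit) → ℝ := Sum.elim c (fun _ => θ) with htgt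
  by_cases hsol : ∃ t : (d ⊕ d ⊕ n ⊕ Unit) → ℝ, (∀ i, 0 ≤ t i) ∧
      ∑ i, t i • (L (col i)) = L tgt
  · obtain ⟨t, ht, hsum⟩ := hsol
    have hsum' : ∑ i, t i • col i = tgt := by
      apply L.injective
      rw [← hsum, map_sum]
      exact Finset.sum_congr rfl (fun i _ => by rw [map_smul])
    set y : d → ℝ := fun k => t (Sum.inl k) - t (Sum.inr (Sum.inl k)) with hy
    have happ : ∀ j : n ⊕ Unit, ∑ i, t i * col i j = tgt j := by
      intro j
      rw [← congrFun hsum' j]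
      simp [Finset.sum_apply]
    refine ⟨y, fun w => ?_, ?_⟩
    · have := happ (Sum.inl w)
      rw [Fintype.sum_sum_type, Fintype.sum_sum_type, Fintype.sum_sum_type] at this
      simp only [hcol, Sum.elim_inl, Sum.elim_inr, htgt, mul_ite, mul_neg, mul_zero,
        mul_one, Finset.sum_ite_eq, Finset.sum_ite_eq', Finset.mem_univ, if_true, Finset.sum_const_zero, Finset.sum_neg_distrib,
        Fintype.sum_unique] at this
      have ht' := ht (Sum.inr (Sum.inr (Sum.inl w)))
      have hexp : ∑ k, y k * A k w
          = ∑ k, t (Sum.inl k) * A k w - ∑ k, t (Sum.inr (Sum.inl k)) * A k w := by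
        rw [← Finset.sum_sub_distrib]
        exact Finset.sum_congr rfl (fun k _ => by rw [hy]; ring)
      rw [hexp]
      linarith
    · have := happ (Sum.inr ())
      rw [Fintype.sum_sum_type, Fintype.sum_sum_type, Fintype.sum_sum_type] at this
      simp only [hcol, Sum.elim_inl, Sum.elim_inr, htgt, mul_ite, mul_neg, mul_zero,
        mul_one, Finset.sum_ite_eq, Finset.sum_ite_eq', Finset.mem_univ, if_true, Finset.sum_const_zero, Finset.sum_neg_distrib,
        Fintype.sum_unique] at this
      have ht' := ht (Sum.inr (Sum.inr (Sum.inr ())))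
      have hexp : ∑ k, y k * b k
          = ∑ k, t (Sum.inl k) * b k - ∑ k, t (Sum.inr (Sum.inl k)) * b k := by
        rw [← Finset.sum_sub_distrib]
        exact Finset.sum_congr rfl (fun k _ => by rw [hy]; ring)
      rw [hexp]
      linarith
  · obtain ⟨yE, hy1, hy2⟩ := farkas_sep (fun i => L (col i)) (L tgt) hsol
    set z : (n ⊕ Unit) → ℝ := (WithLp.linearEquiv 2 ℝ ((n ⊕ Unit) → ℝ)) yE with hz
    have hyEz : yE = L z := by
      simp [hz, hL]
    have hinner : ∀ u : (n ⊕ Unit) → ℝ, ⟪L u, yE⟫ = ∑ j, u j * z j := by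
      intro u
      rw [hyEz]
      simp [PiLp.inner_apply, RCLike.inner_apply, hL, WithLp.linearEquiv,
        mul_comm]
    have hcols : ∀ i, 0 ≤ ∑ j, col i j * z j := fun i => by rw [← hinner]; exact hy1 i
    have htgt' : ∑ j, tgt j * z j < 0 := by rw [← hinner]; exact hy2
    set μ : ℝ := z (Sum.inr ()) with hμ
    set g : n → ℝ := fun w => -(z (Sum.inl w)) with hg
    have hg0 : ∀ w, 0 ≤ g w := by
      intro w
      have := hcols (Sum.inr (Sum.inr (Sum.inl w)))
      rw [Fintype.sum_sum_type] at this
      simp only [hcol, Sum.elim_inl, Sum.elim_inr, ite_mul, neg_one_mul, zero_mul,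
        Finset.sum_ite_eq, Finset.sum_ite_eq', Finset.mem_univ, if_true, Finset.sum_const_zero, Finset.sum_neg_distrib,
        Fintype.sum_unique, add_zero] at this
      simp only [hg]
      linarith
    have hμ0 : 0 ≤ μ := by
      have := hcols (Sum.inr (Sum.inr (Sum.inr ())))
      rw [Fintype.sum_sum_type] at this
      simp only [hcol, Sum.elim_inl, Sum.elim_inr, zero_mul, one_mul,
        Finset.sum_const_zero, Fintype.sum_unique, zero_add] at this
      simpa [hμ] using this
    have hAg : ∀ k, ∑ w, A k w * g w = μ * b k := by
      intro k
      have h1 := hcols (Sum.inl k)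
      have h2 := hcols (Sum.inr (Sum.inl k))
      rw [Fintype.sum_sum_type] at h1 h2
      simp only [hcol, Sum.elim_inl, Sum.elim_inr, neg_mul,
        Fintype.sum_unique, Finset.sum_neg_distrib] at h1 h2
      have hgex : ∑ w, A k w * g w = -∑ w, A k w * z (Sum.inl w) := by
        rw [← Finset.sum_neg_distrib]
        exact Finset.sum_congr rfl (fun w _ => by rw [hg]; ring)
      rw [hgex]
      have he : ∑ w, A k w * z (Sum.inl w) = -(μ * b k) := by
        nlinarith [h1, h2]
      rw [he, neg_neg]
    have hcg : θ * μ < ∑ w, c w * g w := by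
      rw [Fintype.sum_sum_type] at htgt'
      simp only [htgt, Sum.elim_inl, Sum.elim_inr, Fintype.sum_unique,
        Finset.sum_singleton] at htgt'
      have hgex : ∑ w, c w * g w = -∑ w, c w * z (Sum.inl w) := by
        rw [← Finset.sum_neg_distrib]
        exact Finset.sum_congr rfl (fun w _ => by rw [hg]; ring)
      rw [hgex]
      simp only [hμ]
      linarith
    exfalso
    rcases eq_or_lt_of_le hμ0 with hμeq | hμpos
    · -- μ = 0 : unbounded direction
      obtain ⟨f₀, hf₀0, hf₀A⟩ := hfeas
      have hcgpos : 0 < ∑ w, c w * g w := by rw [← hμeq] at hcg; linarith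
      have hobj0 : ∑ w, c w * f₀ w ≤ θ := hbound f₀ hf₀0 hf₀A
      set s : ℝ := (θ - ∑ w, c w * f₀ w) / (∑ w, c w * g w) + 1 with hs
      have hs1 : 1 ≤ s := by
        have : 0 ≤ (θ - ∑ w, c w * f₀ w) / (∑ w, c w * g w) :=
          div_nonneg (by linarith) hcgpos.le
        simp only [hs]; linarith
      have hfeas' : ∀ k, ∑ w, A k w * (f₀ w + s * g w) = b k := by
        intro k
        have : ∑ w, A k w * (f₀ w + s * g w)
            = ∑ w, A k w * f₀ w + s * ∑ w, A k w * g w := by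
          rw [Finset.mul_sum, ← Finset.sum_add_distrib]
          exact Finset.sum_congr rfl (fun w _ => by ring)
        rw [this, hf₀A k, hAg k, ← hμeq]
        ring
      have hobj := hbound (fun w => f₀ w + s * g w)
        (fun w => add_nonneg (hf₀0 w) (mul_nonneg (by linarith) (hg0 w))) hfeas'
      have hexp : ∑ w, c w * (f₀ w + s * g w)
          = ∑ w, c w * f₀ w + s * ∑ w, c w * g w := by
        rw [Finset.mul_sum, ← Finset.sum_add_distrib]
        exact Finset.sum_congr rfl (fun w _ => by ring)
      rw [hexp, hs] at hobj
      have : (θ - ∑ w, c w * f₀ w) / (∑ w, c w * g w) * (∑ w, c w * g w)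
          = θ - ∑ w, c w * f₀ w := div_mul_cancel₀ _ hcgpos.ne'
      nlinarith
    · -- μ > 0 : scaled g is feasible with objective > θ
      have hdiv : ∀ (h : n → ℝ), ∑ w, h w * (g w / μ) = (∑ w, h w * g w) / μ := by
        intro h
        rw [Finset.sum_div]
        exact Finset.sum_congr rfl (fun w _ => by ring)
      have hfeas' : ∀ k, ∑ w, A k w * (g w / μ) = b k := by
        intro k
        rw [hdiv, hAg k]
        field_simp
      have hobj := hbound (fun w => g w / μ)
        (fun w => div_nonneg (hg0 w) hμ0) hfeas'
      rw [hdiv] at hobj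
      rw [div_le_iff₀ hμpos] at hobj
      nlinarith

end Farkas

end LPDuality


/-- Feasibility of dual variables `(θ, α, β)` in the dual LP for the worst-case λ-regret:
(a) `θ ≥ ∑_i α_i(p) m_i + ∑_j β_j(p) q_j` for all prices `p ∈ G`, and
(b) `λ p 1{v ≥ p} − ∑_{s ≤ v} s φ(s) − ∑_i α_i(p) v^i − ∑_j β_j(p) 1{v ≥ r_j} ≤ 0`
for all values `v` and prices `p` in `G`. -/
def dualFeas {K : ℕ} (v : Fin (K + 1) → ℝ) (I : Finset ℕ) (m : ℕ → ℝ)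
    (J : Finset ℕ) (r q : ℕ → ℝ) (φ : Fin (K + 1) → ℝ) (l θ : ℝ)
    (α β : ℕ → Fin (K + 1) → ℝ) : Prop :=
  (∀ p, ∑ i ∈ I, α i p * m i + ∑ j ∈ J, β j p * q j ≤ θ) ∧
  (∀ w p, l * v p * (if v p ≤ v w then 1 else 0) - cum v φ w
      - (∑ i ∈ I, α i p * v w ^ i)
      - (∑ j ∈ J, β j p * (if r j ≤ v w then 1 else 0)) ≤ 0)


section App

variable {K : ℕ}

lemma tail_nonneg (v f : Fin (K + 1) → ℝ) (hf : ∀ i, 0 ≤ f i) (p : ℝ) :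
    0 ≤ tail v f p := by
  apply Finset.sum_nonneg
  intro i _
  split
  · exact hf i
  · exact le_rfl

lemma tail_le_one (v f : Fin (K + 1) → ℝ) (hf : IsDist f) (p : ℝ) :
    tail v f p ≤ 1 := by
  rw [← hf.2]
  apply Finset.sum_le_sum
  intro i _
  split
  · exact le_rfl
  · exact hf.1 i

lemma revenue_nonneg (v φ f : Fin (K + 1) → ℝ) (hφ : ∀ i, 0 ≤ φ i) (hv0 : ∀ i, 0 ≤ v i)
    (hf0 : ∀ i, 0 ≤ f i) : 0 ≤ revenue v φ f :=
  Finset.sum_nonneg fun i _ =>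
    mul_nonneg (mul_nonneg (hφ i) (hv0 i)) (tail_nonneg v f hf0 _)

lemma term_le_opt (v f : Fin (K + 1) → ℝ) (p : Fin (K + 1)) :
    v p * tail v f (v p) ≤ opt v f := by
  unfold opt
  exact le_ciSup (f := fun i => v i * tail v f (v i)) (Finite.bddAbove_range _) p

lemma opt_eq_max (v f : Fin (K + 1) → ℝ) :
    ∃ p, opt v f = v p * tail v f (v p) := by
  obtain ⟨p, hp⟩ := Finite.exists_max (fun i => v i * tail v f (v i))
  refine ⟨p, le_antisymm ?_ (term_le_opt v f p)⟩
  unfold opt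
  exact ciSup_le hp

lemma opt_le_last (v f : Fin (K + 1) → ℝ) (hv : StrictMono v) (hv0 : ∀ i, 0 ≤ v i)
    (hf : IsDist f) : opt v f ≤ v (Fin.last K) := by
  unfold opt
  apply ciSup_le
  intro i
  calc v i * tail v f (v i) ≤ v (Fin.last K) * 1 :=
        mul_le_mul (hv.monotone (Fin.le_last i)) (tail_le_one v f hf _)
          (tail_nonneg v f hf.1 _) (hv0 _)
    _ = v (Fin.last K) := mul_one _

lemma sum_mul_ind (f : Fin (K + 1) → ℝ) (X : ℝ) (c : Fin (K + 1) → Prop)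
    [DecidablePred c] :
    ∑ w, f w * (X * (if c w then 1 else 0)) = X * ∑ w, (if c w then f w else 0) := by
  rw [Finset.mul_sum]
  apply Finset.sum_congr rfl
  intro w _
  by_cases h : c w <;> simp [h] <;> ring

lemma sum_f_cum (v φ f : Fin (K + 1) → ℝ) :
    ∑ w, f w * cum v φ w = revenue v φ f := by
  unfold cum revenue
  calc ∑ w, f w * ∑ s, (if v s ≤ v w then v s * φ s else 0)
      = ∑ w, ∑ s, (if v s ≤ v w then f w * (v s * φ s) else 0) := by
        apply Finset.sum_congr rfl; intro w _
        rw [Finset.mul_sum]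
        exact Finset.sum_congr rfl (fun s _ => by by_cases h : v s ≤ v w <;> simp [h])
    _ = ∑ s, ∑ w, (if v s ≤ v w then f w * (v s * φ s) else 0) := Finset.sum_comm
    _ = ∑ s, φ s * v s * tail v f (v s) := by
        apply Finset.sum_congr rfl; intro s _
        unfold tail
        rw [Finset.mul_sum]
        exact Finset.sum_congr rfl (fun w _ => by by_cases h : v s ≤ v w <;> simp [h] <;> ring)

/-- Dual feasibility implies the worst-case λ-regret bound, pointwise over 𝓕. -/
lemma dual_implies (v : Fin (K + 1) → ℝ) (I : Finset ℕ) (m : ℕ → ℝ)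
    (J : Finset ℕ) (r q : ℕ → ℝ) (φ : Fin (K + 1) → ℝ) (l θ : ℝ)
    (α β : ℕ → Fin (K + 1) → ℝ) (hdf : dualFeas v I m J r q φ l θ α β) :
    ∀ f ∈ MQSet v I m J r q, l * opt v f - revenue v φ f ≤ θ := by
  rintro f ⟨⟨hf0, hf1⟩, hmom, hqnt⟩
  have key : ∀ p, l * v p * tail v f (v p) - revenue v φ f
      - (∑ i ∈ I, α i p * m i) - (∑ j ∈ J, β j p * q j) ≤ 0 := by
    intro p
    have hsum : ∑ w, f w *
        (l * v p * (if v p ≤ v w then 1 else 0) - cum v φ w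
          - (∑ i ∈ I, α i p * v w ^ i)
          - (∑ j ∈ J, β j p * (if r j ≤ v w then 1 else 0))) ≤ 0 :=
      Finset.sum_nonpos fun w _ =>
        mul_nonpos_of_nonneg_of_nonpos (hf0 w) (hdf.2 w p)
    have hexp : ∑ w, f w *
        (l * v p * (if v p ≤ v w then 1 else 0) - cum v φ w
          - (∑ i ∈ I, α i p * v w ^ i)
          - (∑ j ∈ J, β j p * (if r j ≤ v w then 1 else 0)))
        = (∑ w, f w * (l * v p * (if v p ≤ v w then 1 else 0)))
          - (∑ w, f w * cum v φ w)
          - (∑ w, f w * (∑ i ∈ I, α i p * v w ^ i))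
          - (∑ w, f w * (∑ j ∈ J, β j p * (if r j ≤ v w then 1 else 0))) := by
      simp [mul_sub, Finset.sum_sub_distrib]
    have e1 : ∑ w, f w * (l * v p * (if v p ≤ v w then 1 else 0))
        = l * v p * tail v f (v p) := by
      unfold tail
      rw [Finset.mul_sum]
      apply Finset.sum_congr rfl; intro w _
      by_cases h : v p ≤ v w <;> simp [h] <;> ring
    have e2 : ∑ w, f w * cum v φ w = revenue v φ f := sum_f_cum v φ f
    have e3 : ∑ w, f w * (∑ i ∈ I, α i p * v w ^ i) = ∑ i ∈ I, α i p * m i := by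
      calc ∑ w, f w * (∑ i ∈ I, α i p * v w ^ i)
          = ∑ w, ∑ i ∈ I, α i p * (f w * v w ^ i) := by
            apply Finset.sum_congr rfl; intro w _
            rw [Finset.mul_sum]
            exact Finset.sum_congr rfl (fun i _ => by ring)
        _ = ∑ i ∈ I, ∑ w, α i p * (f w * v w ^ i) := Finset.sum_comm
        _ = ∑ i ∈ I, α i p * m i := by
            apply Finset.sum_congr rfl; intro i hi
            rw [← Finset.mul_sum, hmom i hi]
    have e4 : ∑ w, f w * (∑ j ∈ J, β j p * (if r j ≤ v w then 1 else 0))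
        = ∑ j ∈ J, β j p * q j := by
      calc ∑ w, f w * (∑ j ∈ J, β j p * (if r j ≤ v w then 1 else 0))
          = ∑ w, ∑ j ∈ J, f w * (β j p * (if r j ≤ v w then 1 else 0)) := by
            apply Finset.sum_congr rfl; intro w _
            rw [Finset.mul_sum]
        _ = ∑ j ∈ J, ∑ w, f w * (β j p * (if r j ≤ v w then 1 else 0)) :=
            Finset.sum_comm
        _ = ∑ j ∈ J, β j p * q j := by
            apply Finset.sum_congr rfl; intro j hj
            rw [← hqnt j hj]
            unfold tail
            rw [Finset.mul_sum]
            apply Finset.sum_congr rfl; intro w _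
            by_cases h : r j ≤ v w <;> simp [h] <;> ring
    rw [hexp, e1, e2, e3, e4] at hsum
    linarith
  obtain ⟨p₀, hp₀⟩ := opt_eq_max v f
  have h1 := key p₀
  have h2 := hdf.1 p₀
  rw [hp₀, ← mul_assoc]
  linarith

/-- Strong duality: achieving the worst-case λ-regret bound yields dual variables. -/
lemma exists_dual (v : Fin (K + 1) → ℝ) (I : Finset ℕ) (m : ℕ → ℝ)
    (J : Finset ℕ) (r q : ℕ → ℝ) (hI0 : 0 ∈ I) (hm0 : m 0 = 1)
    (hMQ : (MQSet v I m J r q).Nonempty)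
    (φ : Fin (K + 1) → ℝ) (l θ : ℝ) (hl : 0 ≤ l)
    (hach : ∀ f ∈ MQSet v I m J r q, l * opt v f - revenue v φ f ≤ θ) :
    ∃ α β : ℕ → Fin (K + 1) → ℝ, dualFeas v I m J r q φ l θ α β := by
  classical
  set A : ({i // i ∈ I} ⊕ {j // j ∈ J}) → Fin (K + 1) → ℝ := fun k w =>
    Sum.elim (fun i : {i // i ∈ I} => v w ^ (i : ℕ))
      (fun j : {j // j ∈ J} => if r (j : ℕ) ≤ v w then 1 else 0) k with hA
  set b : ({i // i ∈ I} ⊕ {j // j ∈ J}) → ℝ := fun k =>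
    Sum.elim (fun i : {i // i ∈ I} => m i) (fun j : {j // j ∈ J} => q j) k with hb
  have hy : ∀ p : Fin (K + 1), ∃ y : ({i // i ∈ I} ⊕ {j // j ∈ J}) → ℝ,
      (∀ w, (l * v p * (if v p ≤ v w then 1 else 0) - cum v φ w)
        ≤ ∑ k, y k * A k w) ∧ ∑ k, y k * b k ≤ θ := by
    intro p
    apply lp_dual A b (fun w => l * v p * (if v p ≤ v w then 1 else 0) - cum v φ w) θ
    · obtain ⟨f₀, ⟨hf₀0, hf₀1⟩, hf₀m, hf₀q⟩ := hMQ
      refine ⟨f₀, hf₀0, ?_⟩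
      rintro (⟨i, hi⟩ | ⟨j, hj⟩)
      · simp only [hA, hb, Sum.elim_inl]
        rw [← hf₀m i hi]
        exact Finset.sum_congr rfl (fun w _ => mul_comm _ _)
      · simp only [hA, hb, Sum.elim_inr]
        rw [← hf₀q j hj]
        unfold tail
        exact Finset.sum_congr rfl (fun w _ => by
          by_cases h : r j ≤ v w <;> simp [h])
    · intro f hf0 hfA
      have hmem : f ∈ MQSet v I m J r q := by
        refine ⟨⟨hf0, ?_⟩, ?_, ?_⟩
        · have := hfA (Sum.inl ⟨0, hI0⟩)
          simp only [hA, hb, Sum.elim_inl, pow_zero, one_mul] at this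
          rw [this, hm0]
        · intro i hi
          have h' := hfA (Sum.inl ⟨i, hi⟩)
          simp only [hA, hb, Sum.elim_inl] at h'
          rw [← h']
          exact Finset.sum_congr rfl (fun w _ => mul_comm _ _)
        · intro j hj
          have h' := hfA (Sum.inr ⟨j, hj⟩)
          simp only [hA, hb, Sum.elim_inr] at h'
          rw [← h']
          unfold tail
          exact Finset.sum_congr rfl (fun w _ => by
            by_cases h : r j ≤ v w <;> simp [h])
      have hb' := hach f hmem
      have hobj : ∑ w, (l * v p * (if v p ≤ v w then 1 else 0) - cum v φ w) * f w
          = l * (v p * tail v f (v p)) - revenue v φ f := by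
        have : ∑ w, (l * v p * (if v p ≤ v w then 1 else 0) - cum v φ w) * f w
            = (∑ w, f w * (l * v p * (if v p ≤ v w then 1 else 0)))
              - (∑ w, f w * cum v φ w) := by
          rw [← Finset.sum_sub_distrib]
          exact Finset.sum_congr rfl (fun w _ => by ring)
        rw [this, sum_f_cum]
        have e1 : ∑ w, f w * (l * v p * (if v p ≤ v w then 1 else 0))
            = l * v p * tail v f (v p) := by
          unfold tail
          rw [Finset.mul_sum]
          apply Finset.sum_congr rfl; intro w _
          by_cases h : v p ≤ v w <;> simp [h] <;> ring
        rw [e1]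
        ring
      rw [hobj]
      have := mul_le_mul_of_nonneg_left (term_le_opt v f p) hl
      linarith
  choose y hy1 hy2 using hy
  refine ⟨fun i p => if h : i ∈ I then y p (Sum.inl ⟨i, h⟩) else 0,
    fun j p => if h : j ∈ J then y p (Sum.inr ⟨j, h⟩) else 0, ?_, ?_⟩
  · intro p
    have e1 : ∑ i ∈ I, (if h : i ∈ I then y p (Sum.inl ⟨i, h⟩) else 0) * m i
        = ∑ i : {i // i ∈ I}, y p (Sum.inl i) * m i := by
      rw [← Finset.sum_coe_sort I
        (fun i => (if h : i ∈ I then y p (Sum.inl ⟨i, h⟩) else 0) * m i)]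
      exact Finset.sum_congr rfl (fun i _ => by simp [i.2])
    have e2 : ∑ j ∈ J, (if h : j ∈ J then y p (Sum.inr ⟨j, h⟩) else 0) * q j
        = ∑ j : {j // j ∈ J}, y p (Sum.inr j) * q j := by
      rw [← Finset.sum_coe_sort J
        (fun j => (if h : j ∈ J then y p (Sum.inr ⟨j, h⟩) else 0) * q j)]
      exact Finset.sum_congr rfl (fun j _ => by simp [j.2])
    have := hy2 p
    rw [Fintype.sum_sum_type] at this
    simp only [hb, Sum.elim_inl, Sum.elim_inr] at this
    rw [e1, e2]
    linarith
  · intro w p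
    have h := hy1 p w
    rw [Fintype.sum_sum_type] at h
    simp only [hA, Sum.elim_inl, Sum.elim_inr] at h
    have e1 : ∑ i ∈ I, (if h : i ∈ I then y p (Sum.inl ⟨i, h⟩) else 0) * v w ^ i
        = ∑ i : {i // i ∈ I}, y p (Sum.inl i) * v w ^ (i : ℕ) := by
      rw [← Finset.sum_coe_sort I
        (fun i => (if h : i ∈ I then y p (Sum.inl ⟨i, h⟩) else 0) * v w ^ i)]
      exact Finset.sum_congr rfl (fun i _ => by simp [i.2])
    have e2 : ∑ j ∈ J, (if h : j ∈ J then y p (Sum.inr ⟨j, h⟩) else 0)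
          * (if r j ≤ v w then 1 else 0)
        = ∑ j : {j // j ∈ J}, y p (Sum.inr j) * (if r (j : ℕ) ≤ v w then 1 else 0) := by
      rw [← Finset.sum_coe_sort J
        (fun j => (if h : j ∈ J then y p (Sum.inr ⟨j, h⟩) else 0)
          * (if r j ≤ v w then 1 else 0))]
      exact Finset.sum_congr rfl (fun j _ => by simp [j.2])
    rw [e1, e2]
    linarith

end App

/-- a mechanism achieving the triple `(θ_Revenue, θ_Regret, θ_Ratio)` exists
iff the multi-criteria linear feasibility program is feasible; moreover any feasible `φ`
achieves the triple. -/
theorem stmt9 (K : ℕ) (v : Fin (K + 1) → ℝ) (hv : StrictMono v) (hv0 : ∀ i, 0 ≤ v i)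
    (I : Finset ℕ) (m : ℕ → ℝ) (J : Finset ℕ) (r q : ℕ → ℝ)
    (hI0 : 0 ∈ I) (hm0 : m 0 = 1) (hrG : ∀ j ∈ J, ∃ i, r j = v i)
    (hMQ : (MQSet v I m J r q).Nonempty)
    (hopt : ∀ f ∈ MQSet v I m J r q, 0 < opt v f)
    (θRev θReg θRat : ℝ) (hθRat : 0 ≤ θRat) :
    ((∃ φ : Fin (K + 1) → ℝ, IsDist φ ∧
        θRev ≤ worstRevenue v (MQSet v I m J r q) φ ∧
        worstRegret v (MQSet v I m J r q) φ ≤ θReg ∧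
        θRat ≤ worstRatio v (MQSet v I m J r q) φ) ↔
      (∃ (φ : Fin (K + 1) → ℝ) (αRev βRev αReg βReg αRat βRat : ℕ → Fin (K + 1) → ℝ),
        IsDist φ ∧
        dualFeas v I m J r q φ 0 (-θRev) αRev βRev ∧
        dualFeas v I m J r q φ 1 θReg αReg βReg ∧
        dualFeas v I m J r q φ θRat 0 αRat βRat)) ∧
    (∀ (φ : Fin (K + 1) → ℝ) (αRev βRev αReg βReg αRat βRat : ℕ → Fin (K + 1) → ℝ),
      IsDist φ →
      dualFeas v I m J r q φ 0 (-θRev) αRev βRev →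
      dualFeas v I m J r q φ 1 θReg αReg βReg →
      dualFeas v I m J r q φ θRat 0 αRat βRat →
      θRev ≤ worstRevenue v (MQSet v I m J r q) φ ∧
      worstRegret v (MQSet v I m J r q) φ ≤ θReg ∧
      θRat ≤ worstRatio v (MQSet v I m J r q) φ) := by

  classical
  have hmore : ∀ (φ : Fin (K + 1) → ℝ) (αRev βRev αReg βReg αRat βRat : ℕ → Fin (K + 1) → ℝ),
      IsDist φ →
      dualFeas v I m J r q φ 0 (-θRev) αRev βRev →
      dualFeas v I m J r q φ 1 θReg αReg βReg →
      dualFeas v I m J r q φ θRat 0 αRat βRat →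
      θRev ≤ worstRevenue v (MQSet v I m J r q) φ ∧
      worstRegret v (MQSet v I m J r q) φ ≤ θReg ∧
      θRat ≤ worstRatio v (MQSet v I m J r q) φ := by
    intro φ aR bR aG bG aT bT hφ h1 h2 h3
    have k1 := dual_implies v I m J r q φ 0 (-θRev) aR bR h1
    have k2 := dual_implies v I m J r q φ 1 θReg aG bG h2
    have k3 := dual_implies v I m J r q φ θRat 0 aT bT h3
    refine ⟨?_, ?_, ?_⟩
    · apply le_csInf (hMQ.image _)
      rintro x ⟨f, hf, rfl⟩
      have := k1 f hf
      simp only [zero_mul, zero_sub] at this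
      show θRev ≤ revenue v φ f
      linarith
    · apply csSup_le (hMQ.image _)
      rintro x ⟨f, hf, rfl⟩
      have := k2 f hf
      rw [one_mul] at this
      show opt v f - revenue v φ f ≤ θReg
      linarith
    · apply le_csInf (hMQ.image _)
      rintro x ⟨f, hf, rfl⟩
      have := k3 f hf
      show θRat ≤ revenue v φ f / opt v f
      rw [le_div_iff₀ (hopt f hf)]
      linarith
  constructor
  · constructor
    · rintro ⟨φ, hφ, h1, h2, h3⟩
      have hrevnn : ∀ f ∈ MQSet v I m J r q, 0 ≤ revenue v φ f := fun f hf =>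
        revenue_nonneg v φ f hφ.1 hv0 hf.1.1
      have p1 : ∀ f ∈ MQSet v I m J r q, 0 * opt v f - revenue v φ f ≤ -θRev := by
        intro f hf
        have hle : worstRevenue v (MQSet v I m J r q) φ ≤ revenue v φ f :=
          csInf_le ⟨0, by rintro x ⟨g, hg, rfl⟩; exact hrevnn g hg⟩
            ⟨f, hf, rfl⟩
        simp only [zero_mul, zero_sub]
        linarith
      have p2 : ∀ f ∈ MQSet v I m J r q, 1 * opt v f - revenue v φ f ≤ θReg := by
        intro f hf
        have hle : regret v φ f ≤ worstRegret v (MQSet v I m J r q) φ :=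
          le_csSup ⟨v (Fin.last K), by
            rintro x ⟨g, hg, rfl⟩
            have ho := opt_le_last v g hv hv0 hg.1
            have hr := hrevnn g hg
            show opt v g - revenue v φ g ≤ v (Fin.last K)
            linarith⟩ ⟨f, hf, rfl⟩
        unfold regret at hle
        rw [one_mul]
        linarith
      have p3 : ∀ f ∈ MQSet v I m J r q, θRat * opt v f - revenue v φ f ≤ 0 := by
        intro f hf
        have hle : worstRatio v (MQSet v I m J r q) φ ≤ ratio v φ f :=
          csInf_le ⟨0, by
            rintro x ⟨g, hg, rfl⟩
            exact div_nonneg (hrevnn g hg) (hopt g hg).le⟩ ⟨f, hf, rfl⟩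
        have hle' : θRat ≤ ratio v φ f := le_trans h3 hle
        unfold ratio at hle'
        rw [le_div_iff₀ (hopt f hf)] at hle'
        linarith
      obtain ⟨aR, bR, hdR⟩ := exists_dual v I m J r q hI0 hm0 hMQ φ 0 (-θRev) le_rfl p1
      obtain ⟨aG, bG, hdG⟩ := exists_dual v I m J r q hI0 hm0 hMQ φ 1 θReg zero_le_one p2
      obtain ⟨aT, bT, hdT⟩ := exists_dual v I m J r q hI0 hm0 hMQ φ θRat 0 hθRat p3
      exact ⟨φ, aR, bR, aG, bG, aT, bT, hφ, hdR, hdG, hdT⟩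
    · rintro ⟨φ, aR, bR, aG, bG, aT, bT, hφ, h1, h2, h3⟩
      exact ⟨φ, hφ, hmore φ aR bR aG bG aT bT hφ h1 h2 h3⟩
  · exact hmore
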